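/- Under the reflection setup, if Ω_λ has positive Lebesgue measure and N < α, then the Riesz potential u(x) = ∫_Ω |x−y|^(α−N) dy satisfies u(x_λ) < u(x) for every x ∈ Σ_λ with x₁ < λ. -/

import Mathlib

open MeasureTheory

/-- Reflection of `x` across the hyperplane `{z : z 0 = l}`. -/
noncomputable def reflH {N : ℕ} [NeZero N] (l : ℝ) (x : EuclideanSpace ℝ (Fin N)) :
    EuclideanSpace ℝ (Fin N) :=
  WithLp.toLp 2 (Function.update x 0 (2 * l - x 0))

/-- `Σ_λ = {x ∈ Ω : x₁ < λ}`. -/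
def sigmaL {N : ℕ} [NeZero N] (Ω : Set (EuclideanSpace ℝ (Fin N))) (l : ℝ) :
    Set (EuclideanSpace ℝ (Fin N)) :=
  {x ∈ Ω | x 0 < l}

/-- `Ω_λ = Ω \ closure (Σ_λ ∪ Σ'_λ)`. -/
noncomputable def omegaL {N : ℕ} [NeZero N] (Ω : Set (EuclideanSpace ℝ (Fin N))) (l : ℝ) :
    Set (EuclideanSpace ℝ (Fin N)) :=
  Ω \ closure (sigmaL Ω l ∪ reflH l '' sigmaL Ω l)

/-!
Write `u(x) = ∫_Ω k(x - y) dy` with `k(z) = ‖z‖^(α-N)` and `T = Σ_λ ∪ Σ'_λ`. The reflection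
`R = reflH l` is a measure-preserving isometric involution with `R⁻¹ T = T`, so the parts of
`u(x)` and `u(Rx)` over `T` coincide. On `Ω \ T` every `y` has `y₁ ≥ λ`, so for `x₁ < λ` one has
`‖Rx - y‖ ≤ ‖x - y‖`, strictly when `y₁ > λ`; the latter holds on `Ω_λ` because every point of
the open set `Ω` with `y₁ ≤ λ` is a limit of points of `Σ_λ`. Since `t ↦ t^(α-N)` is strictly
increasing and `Ω_λ` has positive measure, the parts over `Ω \ T` compare strictly.
-/

open Filter Topology

section Reflection

variable {N : ℕ} [NeZero N]

lemma reflH_apply (l : ℝ) (x : EuclideanSpace ℝ (Fin N)) (i : Fin N) :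
    reflH l x i = if i = 0 then 2 * l - x 0 else x i := by
  simp [reflH, Function.update_apply]

lemma reflH_involutive (l : ℝ) : Function.Involutive (reflH (N := N) l) := by
  intro x
  ext i
  by_cases hi : i = 0 <;> simp [reflH_apply, hi]

noncomputable def negFirst : EuclideanSpace ℝ (Fin N) ≃ₗᵢ[ℝ] EuclideanSpace ℝ (Fin N) :=
  LinearIsometryEquiv.piLpCongrRight 2
    (fun i => if i = 0 then LinearIsometryEquiv.neg ℝ else LinearIsometryEquiv.refl ℝ ℝ)

lemma negFirst_apply (x : EuclideanSpace ℝ (Fin N)) (i : Fin N) :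
    negFirst x i = if i = 0 then -x i else x i := by
  by_cases hi : i = 0 <;> simp [negFirst, LinearIsometryEquiv.piLpCongrRight_apply, hi]

lemma reflH_eq_add_negFirst (l : ℝ) :
    reflH (N := N) l = fun x => EuclideanSpace.single 0 (2 * l) + negFirst x := by
  ext x i
  by_cases hi : i = 0
  · subst hi
    simp only [reflH_apply, ↓reduceIte, PiLp.add_apply, PiLp.single_eq_same, negFirst_apply]
    ring
  · simp [reflH_apply, negFirst_apply, hi]

lemma measurePreserving_reflH (l : ℝ) : MeasurePreserving (reflH (N := N) l) := by
  rw [reflH_eq_add_negFirst]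
  exact (measurePreserving_add_left volume _).comp negFirst.measurePreserving

lemma measurableEmbedding_reflH (l : ℝ) : MeasurableEmbedding (reflH (N := N) l) := by
  rw [reflH_eq_add_negFirst]
  exact (Homeomorph.addLeft _).measurableEmbedding.comp
    negFirst.toHomeomorph.measurableEmbedding

lemma norm_reflH_sub_reflH (l : ℝ) (x y : EuclideanSpace ℝ (Fin N)) :
    ‖reflH l x - reflH l y‖ = ‖x - y‖ := by
  rw [reflH_eq_add_negFirst, add_sub_add_left_eq_sub, ← map_sub, LinearIsometryEquiv.norm_map]

lemma norm_reflH_sub (l : ℝ) (x y : EuclideanSpace ℝ (Fin N)) :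
    ‖reflH l x - y‖ = ‖x - reflH l y‖ := by
  rw [← norm_reflH_sub_reflH l, reflH_involutive l]

lemma norm_sub_sq_sub_norm_reflH_sub_sq (l : ℝ) (x y : EuclideanSpace ℝ (Fin N)) :
    ‖x - y‖ ^ 2 - ‖reflH l x - y‖ ^ 2 = 4 * (l - x 0) * (y 0 - l) := by
  rw [EuclideanSpace.real_norm_sq_eq, EuclideanSpace.real_norm_sq_eq, ← Finset.sum_sub_distrib,
    Finset.sum_eq_single 0]
  · simp only [PiLp.sub_apply, reflH_apply, ↓reduceIte]
    ring
  · intro i _ hi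
    simp [reflH_apply, hi]
  · simp

lemma norm_reflH_sub_le {l : ℝ} {x y : EuclideanSpace ℝ (Fin N)} (hx : x 0 ≤ l) (hy : l ≤ y 0) :
    ‖reflH l x - y‖ ≤ ‖x - y‖ := by
  have hsq := norm_sub_sq_sub_norm_reflH_sub_sq l x y
  have hgap : 0 ≤ 4 * (l - x 0) * (y 0 - l) :=
    mul_nonneg (mul_nonneg zero_le_four (sub_nonneg.2 hx)) (sub_nonneg.2 hy)
  exact (pow_le_pow_iff_left₀ (norm_nonneg _) (norm_nonneg _) two_ne_zero).1 (by linarith)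

lemma norm_reflH_sub_lt {l : ℝ} {x y : EuclideanSpace ℝ (Fin N)} (hx : x 0 < l) (hy : l < y 0) :
    ‖reflH l x - y‖ < ‖x - y‖ := by
  have hsq := norm_sub_sq_sub_norm_reflH_sub_sq l x y
  have hgap : 0 < 4 * (l - x 0) * (y 0 - l) :=
    mul_pos (mul_pos four_pos (sub_pos.2 hx)) (sub_pos.2 hy)
  exact (pow_lt_pow_iff_left₀ (norm_nonneg _) (norm_nonneg _) two_ne_zero).1 (by linarith)

lemma preimage_reflH_union_image (l : ℝ) (s : Set (EuclideanSpace ℝ (Fin N))) :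
    reflH l ⁻¹' (s ∪ reflH l '' s) = s ∪ reflH l '' s := by
  rw [Set.preimage_union, ← (reflH_involutive l).image_eq_preimage_symm, Set.image_image]
  simp only [reflH_involutive l _, Set.image_id']
  exact Set.union_comm _ _

lemma setIntegral_comp_reflH {l : ℝ} {t : Set (EuclideanSpace ℝ (Fin N))}
    (ht : reflH l ⁻¹' t = t) (f : EuclideanSpace ℝ (Fin N) → ℝ) :
    ∫ y in t, f (reflH l y) = ∫ y in t, f y := by
  conv_lhs => rw [← ht]
  exact (measurePreserving_reflH l).setIntegral_preimage_emb (measurableEmbedding_reflH l) f t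

end Reflection

theorem setIntegral_lt_setIntegral_of_setIntegral_eq {X : Type*} [MeasurableSpace X]
    {μ : Measure X} {s t : Set X} {f g : X → ℝ}
    (hs : MeasurableSet s) (ht : MeasurableSet t) (hts : t ⊆ s)
    (hf : IntegrableOn f s μ) (hg : IntegrableOn g s μ)
    (heq : ∫ x in t, f x ∂μ = ∫ x in t, g x ∂μ) (hle : ∀ x ∈ s \ t, f x ≤ g x)
    (hlt : 0 < μ {x ∈ s \ t | f x < g x}) :
    ∫ x in s, f x ∂μ < ∫ x in s, g x ∂μ := by
  have hsplit : ∀ h : X → ℝ, IntegrableOn h s μ →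
      ∫ x in s, h x ∂μ = ∫ x in t, h x ∂μ + ∫ x in s \ t, h x ∂μ := fun h hh => by
    rw [← integral_inter_add_sdiff ht hh, Set.inter_eq_right.2 hts]
  have hf' := hf.mono_set (s := s \ t) Set.sdiff_subset
  have hg' := hg.mono_set (s := s \ t) Set.sdiff_subset
  have hdiff : 0 < ∫ x in s \ t, (g x - f x) ∂μ := by
    rw [setIntegral_pos_iff_support_of_nonneg_ae (f := fun x => g x - f x) _ (hg'.sub hf')]
    · exact hlt.trans_le (measure_mono fun x hx => ⟨sub_ne_zero.2 (ne_of_gt hx.2), hx.1⟩)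
    · filter_upwards [ae_restrict_mem (hs.diff ht)] with x hx using sub_nonneg.2 (hle x hx)
  rw [integral_sub hg' hf'] at hdiff
  rw [hsplit f hf, hsplit g hg, heq]
  linarith

theorem integrableOn_norm_sub_rpow {E : Type*} [NormedAddCommGroup E] [MeasurableSpace E]
    [BorelSpace E] [ProperSpace E] {μ : Measure E} [IsFiniteMeasureOnCompacts μ] {s : Set E}
    (hs : Bornology.IsBounded s) (x : E) {p : ℝ} (hp : 0 ≤ p) :
    IntegrableOn (fun y => ‖x - y‖ ^ p) s μ :=
  ((continuous_const.sub continuous_id).norm.rpow_const fun _ => Or.inr hp).continuousOn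
    |>.integrableOn_compact hs.isCompact_closure |>.mono_set subset_closure

section HalfDomain

variable {N : ℕ} [NeZero N] {Ω : Set (EuclideanSpace ℝ (Fin N))} {l : ℝ}

lemma isOpen_sigmaL (hΩ : IsOpen Ω) : IsOpen (sigmaL Ω l) :=
  hΩ.inter (isOpen_lt (by fun_prop : Continuous fun y : EuclideanSpace ℝ (Fin N) => y 0)
    continuous_const)

lemma mem_closure_sigmaL (hΩ : IsOpen Ω) {y : EuclideanSpace ℝ (Fin N)} (hy : y ∈ Ω)
    (hyl : y 0 ≤ l) : y ∈ closure (sigmaL Ω l) := by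
  have hlim : Tendsto (fun t : ℝ => y - t • EuclideanSpace.single 0 1) (𝓝[>] 0) (𝓝 y) := by
    have : Continuous fun t : ℝ => y - t • EuclideanSpace.single (0 : Fin N) (1 : ℝ) := by
      fun_prop
    simpa using (this.tendsto 0).mono_left nhdsWithin_le_nhds
  refine mem_closure_of_tendsto hlim ?_
  filter_upwards [hlim (hΩ.mem_nhds hy), self_mem_nhdsWithin] with t htΩ ht
  refine ⟨htΩ, ?_⟩
  simp only [PiLp.sub_apply, PiLp.smul_apply, PiLp.single_apply, ↓reduceIte,
    smul_eq_mul, mul_one]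
  linarith [Set.mem_Ioi.1 ht]

lemma lt_of_mem_omegaL (hΩ : IsOpen Ω) {y : EuclideanSpace ℝ (Fin N)} (hy : y ∈ omegaL Ω l) :
    l < y 0 := by
  by_contra! h
  exact hy.2 (closure_mono Set.subset_union_left (mem_closure_sigmaL hΩ hy.1 h))

end HalfDomain

/-- If `Ω_λ` has positive Lebesgue measure and `N < α`, the Riesz potential
`u(x) = ∫_Ω |x−y|^(α−N) dy` satisfies `u(x_λ) < u(x)` for `x ∈ Σ_λ`. -/
theorem riesz_potential_reflection_lt {N : ℕ} [NeZero N]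
    (Ω : Set (EuclideanSpace ℝ (Fin N))) (hΩo : IsOpen Ω) (hΩb : Bornology.IsBounded Ω)
    (l : ℝ) (hrefl : reflH l '' sigmaL Ω l ⊆ Ω)
    (hpos : 0 < volume (omegaL Ω l)) (α : ℝ) (hα : (N : ℝ) < α) :
    ∀ x ∈ Ω, x 0 < l →
      (∫ y in Ω, ‖reflH l x - y‖ ^ (α - N)) < ∫ y in Ω, ‖x - y‖ ^ (α - N) := by
  intro x _ hxl
  have hp : 0 < α - N := sub_pos.2 hα
  set T := sigmaL Ω l ∪ reflH l '' sigmaL Ω l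
  have hTΩ : T ⊆ Ω := Set.union_subset (fun _ hy => hy.1) hrefl
  have hT : MeasurableSet T := (isOpen_sigmaL hΩo).measurableSet.union
    ((measurableEmbedding_reflH l).measurableSet_image.2 (isOpen_sigmaL hΩo).measurableSet)
  refine setIntegral_lt_setIntegral_of_setIntegral_eq hΩo.measurableSet hT hTΩ
    (integrableOn_norm_sub_rpow hΩb _ hp.le) (integrableOn_norm_sub_rpow hΩb _ hp.le) ?_ ?_ ?_
  · simp_rw [norm_reflH_sub l x]
    exact setIntegral_comp_reflH (preimage_reflH_union_image l _) (fun y => ‖x - y‖ ^ (α - N))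
  · intro y hy
    have hly : l ≤ y 0 := not_lt.1 fun h => hy.2 (Or.inl ⟨hy.1, h⟩)
    exact Real.rpow_le_rpow (norm_nonneg _) (norm_reflH_sub_le hxl.le hly) hp.le
  · refine hpos.trans_le (measure_mono fun y hy => ⟨⟨hy.1, fun hyT => hy.2 (subset_closure hyT)⟩,
      Real.rpow_lt_rpow (norm_nonneg _) (norm_reflH_sub_lt hxl (lt_of_mem_omegaL hΩo hy)) hp⟩)
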